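/- Let R = ℤ/(det(C(X_n)))ℤ with X extensible, and let A = C(X_n) viewed over R. If b ∈ R^n satisfies A^T b = 0 and b_n = −Δ, then any x ∈ R^n with A^T x = 0 is an R-multiple of b; in particular b is the unique solution of A^T b = 0 with last coordinate −Δ. -/
import Mathlib


open scoped BigOperators

def Xmat (d : ℕ) (C : Matrix (Fin d) (Fin d) ℤ) (n : ℕ) : Matrix (Fin n) (Fin n) ℤ :=
  Matrix.of fun i j =>
    if h : (i : ℕ) < d ∧ (j : ℕ) < d then C ⟨i, h.1⟩ ⟨j, h.2⟩
    else if (i : ℕ) = (j : ℕ) then 2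
    else if (i : ℕ) + 1 = (j : ℕ) ∨ (j : ℕ) + 1 = (i : ℕ) then -1
    else 0

def detX (d : ℕ) (C : Matrix (Fin d) (Fin d) ℤ) (n : ℕ) : ℤ := (Xmat d C n).det

def Δdiff (d : ℕ) (C : Matrix (Fin d) (Fin d) ℤ) : ℤ := detX d C d - detX d C (d - 1)

def Extensible (d : ℕ) (C : Matrix (Fin d) (Fin d) ℤ) : Prop :=
  Δdiff d C ≠ 0 ∧ detX d C d ≠ 0 ∧ IsCoprime (Δdiff d C) (detX d C d)

def fw (n : ℕ) (i : Fin n) : Fin n → ℤ := Pi.single i 1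

def col (d : ℕ) (C : Matrix (Fin d) (Fin d) ℤ) (n : ℕ) (j : Fin n) : Fin n → ℤ :=
  fun i => Xmat d C n i j

def Qlat (d : ℕ) (C : Matrix (Fin d) (Fin d) ℤ) (n : ℕ) : Submodule ℤ (Fin n → ℤ) :=
  Submodule.span ℤ (Set.range (col d C n))

def lastFin (n : ℕ) (h : 0 < n) : Fin n := ⟨n - 1, by omega⟩

def ASeq (d : ℕ) (C : Matrix (Fin d) (Fin d) ℤ) (a : ℕ → ℤ) : Prop :=
  ∀ n, d ≤ n → detX d C n ≠ 0 → ∀ i : Fin n,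
    (-(Δdiff d C)) • fw n i - a (i : ℕ) • fw n (lastFin n i.pos) ∈ Qlat d C n

lemma Xmat_congr (d : ℕ) (C : Matrix (Fin d) (Fin d) ℤ) {n n' : ℕ} (i j : Fin n)
    (i' j' : Fin n') (hi : (i:ℕ) = (i':ℕ)) (hj : (j:ℕ) = (j':ℕ)) :
    Xmat d C n i j = Xmat d C n' i' j' := by
  simp only [Xmat, Matrix.of_apply, hi, hj]
lemma Xmat_apply_nC (d : ℕ) (C : Matrix (Fin d) (Fin d) ℤ) {n : ℕ} (i j : Fin n)
    (h : d ≤ (i:ℕ) ∨ d ≤ (j:ℕ)) :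
    Xmat d C n i j = if (i:ℕ) = (j:ℕ) then 2
      else if (i : ℕ) + 1 = (j : ℕ) ∨ (j : ℕ) + 1 = (i : ℕ) then -1 else 0 := by
  simp only [Xmat, Matrix.of_apply]
  rw [dif_neg]
  omega
lemma succAbove_val (k : ℕ) (j : Fin (k+1)) :
    ((((Fin.last k).castSucc).succAbove j : Fin (k+2)) : ℕ) =
      if (j:ℕ) < k then (j:ℕ) else k+1 := by
  rcases lt_or_ge (j:ℕ) k with h | h
  · rw [Fin.succAbove_of_castSucc_lt]
    · simp [h]
    · simp [Fin.lt_def, h]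
  · rw [Fin.succAbove_of_le_castSucc]
    · have : (j:ℕ) = k := by omega
      simp [this]
    · simp [Fin.le_def]; omega

lemma detX_rec (d : ℕ) (C : Matrix (Fin d) (Fin d) ℤ) (k : ℕ) (hk : d ≤ k + 1) :
    detX d C (k + 2) = 2 * detX d C (k + 1) - detX d C k := by
  set A := Xmat d C (k+2) with hA
  set S : Matrix (Fin (k+1)) (Fin (k+1)) ℤ :=
      A.submatrix (Fin.last (k+1)).succAbove ((Fin.last k).castSucc).succAbove with hS
  have hcol : ((((Fin.last k).castSucc).succAbove (Fin.last k)) : ℕ) = k + 1 := by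
    rw [succAbove_val]; simp
  have hSdet : S.det = - detX d C k := by
    have h2 : S.det = ∑ i : Fin (k+1),
        (-1)^((i:ℕ) + ((Fin.last k):ℕ)) * S i (Fin.last k) *
          (S.submatrix i.succAbove (Fin.last k).succAbove).det :=
      Matrix.det_succ_column S (Fin.last k)
    rw [Fin.sum_univ_castSucc] at h2
    have hz : ∀ i : Fin k, S i.castSucc (Fin.last k) = 0 := by
      intro i
      have hrow : (((Fin.last (k+1)).succAbove i.castSucc) : ℕ) = (i:ℕ) := by
        simp [Fin.succAbove_last]
      show A ((Fin.last (k+1)).succAbove i.castSucc)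
          (((Fin.last k).castSucc).succAbove (Fin.last k)) = 0
      rw [hA, Xmat_apply_nC _ _ _ _ (Or.inr (by rw [hcol]; omega)), hrow, hcol,
        if_neg (by omega), if_neg (by omega)]
    have hlastentry : S (Fin.last k) (Fin.last k) = -1 := by
      have hrow : (((Fin.last (k+1)).succAbove (Fin.last k)) : ℕ) = k := by
        simp [Fin.succAbove_last]
      show A ((Fin.last (k+1)).succAbove (Fin.last k))
          (((Fin.last k).castSucc).succAbove (Fin.last k)) = -1
      rw [hA, Xmat_apply_nC _ _ _ _ (Or.inr (by rw [hcol]; omega)), hrow, hcol,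
        if_neg (by omega), if_pos (by omega)]
    have hminor : S.submatrix (Fin.last k).succAbove (Fin.last k).succAbove = Xmat d C k := by
      ext i j
      simp only [Matrix.submatrix_apply, Fin.succAbove_last, hS, hA]
      apply Xmat_congr
      · simp
      · rw [succAbove_val]; simp [j.isLt]
    simp only [hz, mul_zero, zero_mul, Finset.sum_const_zero, zero_add] at h2
    rw [h2, hlastentry, hminor]
    have h3 : ((Fin.last k : Fin (k+1)) : ℕ) = k := rfl
    rw [h3]
    have h4 : (-1 : ℤ)^(k + k) = 1 := Even.neg_one_pow ⟨k, by ring⟩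
    simp only [detX] at *
    rw [h4]; ring
  -- now the row expansion of the big determinant
  have h1 : detX d C (k+2) = ∑ j : Fin (k+2),
      (-1)^(((Fin.last (k+1)):ℕ) + (j:ℕ)) * A (Fin.last (k+1)) j *
        (A.submatrix (Fin.last (k+1)).succAbove j.succAbove).det :=
    Matrix.det_succ_row A (Fin.last (k+1))
  rw [Fin.sum_univ_castSucc, Fin.sum_univ_castSucc] at h1
  have hz : ∀ j : Fin k, A (Fin.last (k+1)) j.castSucc.castSucc = 0 := by
    intro j
    rw [hA, Xmat_apply_nC _ _ _ _ (Or.inl (by simp; omega))]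
    have : ((j.castSucc.castSucc : Fin (k+2)) : ℕ) = (j:ℕ) := by simp
    rw [Fin.val_last, this, if_neg (by omega), if_neg (by omega)]
  have e1 : A (Fin.last (k+1)) (Fin.last (k+1)) = 2 := by
    rw [hA, Xmat_apply_nC _ _ _ _ (Or.inl (by simp; omega)), if_pos rfl]
  have e2 : A (Fin.last (k+1)) ((Fin.last k).castSucc) = -1 := by
    rw [hA, Xmat_apply_nC _ _ _ _ (Or.inl (by simp; omega))]
    have : (((Fin.last k).castSucc : Fin (k+2)) : ℕ) = k := by simp
    rw [Fin.val_last, this, if_neg (by omega), if_pos (by omega)]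
  have hsub1 : A.submatrix (Fin.last (k+1)).succAbove (Fin.last (k+1)).succAbove
      = Xmat d C (k+1) := by
    ext i j
    simp only [Matrix.submatrix_apply, Fin.succAbove_last, hA]
    apply Xmat_congr <;> simp
  simp only [hz, mul_zero, zero_mul, Finset.sum_const_zero, zero_add] at h1
  rw [e1, e2, hsub1, ← hS, hSdet] at h1
  have h5 : (-1 : ℤ)^(((Fin.last (k+1) : Fin (k+2)):ℕ) + ((Fin.last (k+1) : Fin (k+2)):ℕ)) = 1 :=
    Even.neg_one_pow ⟨k+1, by simp⟩
  have h6 : (-1 : ℤ)^(((Fin.last (k+1) : Fin (k+2)):ℕ) + (((Fin.last k).castSucc : Fin (k+2)):ℕ)) = -1 :=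
    Odd.neg_one_pow ⟨k, by simp; omega⟩
  rw [h5, h6] at h1
  simp only [detX] at h1 ⊢
  rw [h1]; ring

lemma detX_diff (d : ℕ) (hd : 1 ≤ d) (C : Matrix (Fin d) (Fin d) ℤ) :
    ∀ m, d - 1 ≤ m → detX d C (m + 1) - detX d C m = Δdiff d C := by
  intro m hm
  induction m, hm using Nat.le_induction with
  | base =>
    have : d - 1 + 1 = d := by omega
    rw [this, Δdiff]
  | succ m hm ih =>
    have hrec := detX_rec d C m (by omega)
    rw [show m + 2 = m + 1 + 1 from rfl] at hrec
    omega

lemma coprime_detX (d : ℕ) (hd : 1 ≤ d) (C : Matrix (Fin d) (Fin d) ℤ)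
    (h : IsCoprime (Δdiff d C) (detX d C d)) :
    ∀ n, d ≤ n → IsCoprime (Δdiff d C) (detX d C n) := by
  intro n hn
  induction n, hn using Nat.le_induction with
  | base => exact h
  | succ n hn ih =>
    have hstep : detX d C (n + 1) = detX d C n + Δdiff d C * 1 := by
      have := detX_diff d hd C n (by omega)
      omega
    rw [hstep]
    exact ih.add_mul_left_right 1

/-- Over `R = ℤ/(det C(X_n))ℤ`, the solution space of `Aᵀ x = 0` (with
`A = C(X_n)`) is spanned by any solution `b` with `b_n = -Δ`, and such a `b`
is unique. -/
theorem tensor_stab_kernel_cyclic (d : ℕ) (hd : 1 ≤ d)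
    (C : Matrix (Fin d) (Fin d) ℤ) (hX : Extensible d C)
    (n : ℕ) (hn : d ≤ n) (hdet : detX d C n ≠ 0)
    (A : Matrix (Fin n) (Fin n) (ZMod (detX d C n).natAbs))
    (hA : A = (Xmat d C n).map (Int.cast : ℤ → ZMod (detX d C n).natAbs))
    (b : Fin n → ZMod (detX d C n).natAbs)
    (hb : A.transpose.mulVec b = 0)
    (hbn : b (lastFin n (by omega)) = ((-(Δdiff d C) : ℤ) : ZMod (detX d C n).natAbs)) :
    (∀ x : Fin n → ZMod (detX d C n).natAbs,
        A.transpose.mulVec x = 0 → ∃ c : ZMod (detX d C n).natAbs, x = c • b) ∧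
    (∀ b' : Fin n → ZMod (detX d C n).natAbs,
        A.transpose.mulVec b' = 0 →
        b' (lastFin n (by omega)) = ((-(Δdiff d C) : ℤ) : ZMod (detX d C n).natAbs) →
        b' = b) := by
  obtain ⟨m, rfl⟩ : ∃ m, n = m + 1 := ⟨n - 1, by omega⟩
  haveI : NeZero (detX d C (m+1)).natAbs := ⟨Int.natAbs_ne_zero.mpr hdet⟩
  have hlast : lastFin (m+1) (by omega) = Fin.last m := rfl
  have hdet0 : ((detX d C (m+1) : ℤ) : ZMod (detX d C (m+1)).natAbs) = 0 := by
    rw [ZMod.intCast_zmod_eq_zero_iff_dvd]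
    exact Int.natAbs_dvd.mpr dvd_rfl
  have hdiffm : detX d C (m + 1) - detX d C m = Δdiff d C :=
    detX_diff d hd C m (by omega)
  have hcop : IsCoprime (Δdiff d C) (detX d C (m+1)) :=
    coprime_detX d hd C hX.2.2 (m+1) hn
  have hunit : IsUnit ((-(Δdiff d C) : ℤ) : ZMod (detX d C (m+1)).natAbs) := by
    have h1 : IsCoprime (-(Δdiff d C)) (detX d C (m+1)) := hcop.neg_left
    have h2 : Int.gcd (-(Δdiff d C)) (detX d C (m+1)) = 1 :=
      Int.isCoprime_iff_gcd_eq_one.mp h1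
    have h3 : Nat.Coprime (-(Δdiff d C)).natAbs (detX d C (m+1)).natAbs := h2
    have h4 : IsUnit (((-(Δdiff d C)).natAbs : ℕ) : ZMod (detX d C (m+1)).natAbs) :=
      (ZMod.isUnit_iff_coprime _ _).mpr h3
    rcases Int.natAbs_eq (-(Δdiff d C)) with he | he
    · rw [he, Int.cast_natCast]; exact h4
    · rw [he, Int.cast_neg, Int.cast_natCast]; exact h4.neg
  set B : Matrix (Fin m) (Fin m) (ZMod (detX d C (m+1)).natAbs) :=
    (Xmat d C m).map (Int.cast : ℤ → ZMod (detX d C (m+1)).natAbs) with hB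
  have hBdet : IsUnit B.det := by
    have hmap : B.det = ((detX d C m : ℤ) : ZMod (detX d C (m+1)).natAbs) := by
      rw [hB, show (Int.cast : ℤ → ZMod (detX d C (m+1)).natAbs)
          = ⇑(Int.castRingHom (ZMod (detX d C (m+1)).natAbs)) from rfl,
        ← RingHom.mapMatrix_apply, ← RingHom.map_det]
      rfl
    rw [hmap, show detX d C m = detX d C (m+1) - Δdiff d C by omega]
    push_cast
    rw [hdet0]
    simpa using hunit
  have hBTdet : IsUnit B.transpose.det := by rwa [Matrix.det_transpose]
  have key : ∀ y : Fin (m+1) → ZMod (detX d C (m+1)).natAbs,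
      A.transpose.mulVec y = 0 → y (Fin.last m) = 0 → y = 0 := by
    intro y hy hyl
    set y' : Fin m → ZMod (detX d C (m+1)).natAbs := fun i => y i.castSucc with hy'
    have hBy : B.transpose.mulVec y' = 0 := by
      funext j
      have hj := congrFun hy j.castSucc
      simp only [Matrix.mulVec, Matrix.transpose_apply, dotProduct,
        Pi.zero_apply] at hj ⊢
      rw [Fin.sum_univ_castSucc, hyl, mul_zero, add_zero] at hj
      rw [← hj]
      apply Finset.sum_congr rfl
      intro i _
      have hBA : B i j = A i.castSucc j.castSucc := by
        rw [hA, hB]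
        simp only [Matrix.map_apply]
        exact congrArg _ (Xmat_congr d C i j i.castSucc j.castSucc (by simp) (by simp))
      rw [hBA]
    have hzero : y' = 0 := by
      have h5 := Matrix.nonsing_inv_mul B.transpose hBTdet
      calc y' = ((B.transpose)⁻¹ * B.transpose).mulVec y' := by
                rw [h5, Matrix.one_mulVec]
        _ = (B.transpose)⁻¹.mulVec (B.transpose.mulVec y') := by
                rw [← Matrix.mulVec_mulVec]
        _ = 0 := by rw [hBy, Matrix.mulVec_zero]
    funext i
    induction i using Fin.lastCases with
    | last => exact hyl
    | cast i => exact congrFun hzero i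
  rw [hlast] at hbn
  constructor
  · intro x hx
    refine ⟨x (Fin.last m) * ↑hunit.unit⁻¹, ?_⟩
    have h6 : A.transpose.mulVec (x - (x (Fin.last m) * ↑hunit.unit⁻¹) • b) = 0 := by
      rw [Matrix.mulVec_sub, Matrix.mulVec_smul, hx, hb, smul_zero, sub_zero]
    have h7 : (x - (x (Fin.last m) * ↑hunit.unit⁻¹) • b) (Fin.last m) = 0 := by
      have hbu : b (Fin.last m) = ↑hunit.unit := by
        rw [hbn]; exact hunit.unit_spec.symm
      simp only [Pi.sub_apply, Pi.smul_apply, smul_eq_mul, hbu]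
      rw [mul_assoc, Units.inv_mul, mul_one, sub_self]
    have h8 := key _ h6 h7
    rw [sub_eq_zero] at h8
    exact h8
  · intro b' hb' hbn'
    rw [hlast] at hbn'
    have h6 : A.transpose.mulVec (b' - b) = 0 := by
      rw [Matrix.mulVec_sub, hb', hb, sub_zero]
    have h7 : (b' - b) (Fin.last m) = 0 := by
      rw [Pi.sub_apply, hbn, hbn', sub_self]
    have h8 := key _ h6 h7
    rwa [sub_eq_zero] at h8
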